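/- arXiv:math/0404325 — 4 statements merged into one kernel-verified Lean document; each statement's English description precedes it below -/
import Mathlib

section
/- Let G be a finite simple graph in which every vertex has degree at most Δ, where Δ is a positive integer, and suppose that G contains no triangles (no three pairwise adjacent vertices). Then α(G) ≥ (n(G) / (8Δ)) · log₂ Δ. -/
open Finset

/-- Independence number of a graph on a finite vertex type. -/
noncomputable def indepNum {W : Type*} [Fintype W] (G : SimpleGraph W) : ℕ :=
  sSup {k | ∃ s : Finset W, (∀ u ∈ s, ∀ v ∈ s, ¬ G.Adj u v) ∧ s.card = k}

/-! Average over all independent sets `I` of `G`. Fix a vertex `v` and the trace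
`S = I \ N[v]`: the independent sets with this trace are `S ∪ {v}` and `S ∪ T` for every
`T ⊆ X`, where `X` is the set of neighbours of `v` with no neighbour in `S` (such a `T` is
independent because `G` is triangle-free). On these `2 ^ |X| + 1` sets the weight
`Δ · [v ∈ I] + |I ∩ N(v)|` has total `Δ + |X| 2 ^ (|X| - 1) ≥ (2 ^ |X| + 1) log₂ Δ / 2`, so its
average over all `I` is at least `log₂ Δ / 2`. Summed over `v`, the weight of `I` is at most
`2Δ|I| ≤ 2Δα`, whence `n log₂ Δ ≤ 4Δα`. -/

namespace Real

theorem self_le_two_rpow (t : ℝ) : t ≤ 2 ^ t := by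
  rcases le_or_gt t 1 with ht | ht
  · rcases le_or_gt t 0 with ht0 | ht0
    · exact ht0.trans (by positivity)
    · exact ht.trans (one_le_rpow one_le_two ht0.le)
  · have := one_add_mul_self_le_rpow_one_add (by norm_num : (-1 : ℝ) ≤ 1) ht.le
    norm_num at this
    linarith

theorem logb_two_le_self {z : ℝ} (hz : 0 < z) : logb 2 z ≤ z :=
  (logb_le_iff_le_rpow one_lt_two hz).2 (self_le_two_rpow z)

theorem logb_two_mul_two_pow_add_one_le {Δ : ℝ} (hΔ : 0 < Δ) (x : ℕ) :
    logb 2 Δ * (2 ^ x + 1) ≤ 2 * Δ + x * 2 ^ x := by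
  have h2x : (0 : ℝ) < 2 ^ x := by positivity
  have hL : logb 2 Δ ≤ Δ := logb_two_le_self hΔ
  have hdiff : (logb 2 Δ - x) * 2 ^ x ≤ Δ := by
    have h := logb_two_le_self (div_pos hΔ h2x)
    rw [logb_div hΔ.ne' h2x.ne', logb_pow, logb_self_eq_one one_lt_two,
      mul_one] at h
    calc (logb 2 Δ - x) * 2 ^ x ≤ Δ / 2 ^ x * 2 ^ x := by gcongr
      _ = Δ := div_mul_cancel₀ Δ h2x.ne'
  nlinarith

end Real

theorem Finset.two_mul_sum_card_powerset {α : Type*} [DecidableEq α] (X : Finset α) :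
    2 * ∑ T ∈ X.powerset, #T = #X * 2 ^ #X := by
  induction X using Finset.induction_on with
  | empty => simp
  | insert a X ha ih =>
    have hcard : ∀ T ∈ X.powerset, #(insert a T) = #T + 1 := fun T hT =>
      card_insert_of_notMem fun h => ha (mem_powerset.1 hT h)
    rw [sum_powerset_insert ha, sum_congr rfl hcard, sum_add_distrib, card_insert_of_notMem ha,
      sum_const, card_powerset]
    simp only [smul_eq_mul, mul_one]
    rw [pow_succ]
    linarith

theorem indepNum_eq_indepNum {V : Type*} [Fintype V] (G : SimpleGraph V) :
    indepNum G = G.indepNum := by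
  have hiff : ∀ s : Finset V, (∀ u ∈ s, ∀ w ∈ s, ¬ G.Adj u w) ↔ G.IsIndepSet s :=
    fun s => ⟨fun h u hu w hw _ => h u hu w hw,
      fun h u hu w hw huw => (h hu hw (G.ne_of_adj huw)) huw⟩
  simp only [indepNum, SimpleGraph.indepNum, hiff, SimpleGraph.isNIndepSet_iff]

namespace SimpleGraph

variable {V : Type*} [Fintype V] [DecidableEq V] (G : SimpleGraph V) [DecidableRel G.Adj]

noncomputable def indepSets : Finset (Finset V) := {s | G.IsIndepSet s}

def freeNbrs (v : V) (S : Finset V) : Finset V :=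
  {u ∈ G.neighborFinset v | ∀ w ∈ S, ¬ G.Adj u w}

def extensions (v : V) (S : Finset V) : Finset (Finset V) :=
  insert (insert v S) ((G.freeNbrs v S).powerset.image (S ∪ ·))

def nbhdWeight (Δ : ℕ) (v : V) (s : Finset V) : ℕ :=
  (if v ∈ s then Δ else 0) + #(s ∩ G.neighborFinset v)

variable {G}

@[simp] theorem mem_indepSets {s : Finset V} : s ∈ G.indepSets ↔ G.IsIndepSet s := by
  simp [indepSets]

theorem disjoint_freeNbrs {v : V} {S : Finset V}
    (hSv : Disjoint S (insert v (G.neighborFinset v))) : Disjoint S (G.freeNbrs v S) :=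
  hSv.mono_right ((filter_subset _ _).trans (subset_insert _ _))

theorem notMem_freeNbrs_self (v : V) (S : Finset V) : v ∉ G.freeNbrs v S := by
  simp [freeNbrs]

theorem injOn_union_powerset_freeNbrs {v : V} {S : Finset V}
    (hSv : Disjoint S (insert v (G.neighborFinset v))) :
    Set.InjOn (S ∪ ·) (G.freeNbrs v S).powerset := by
  intro T₁ hT₁ T₂ hT₂ h
  have hdisj {T} (hT : T ∈ (G.freeNbrs v S).powerset) : Disjoint S T :=
    (disjoint_freeNbrs hSv).mono_right (mem_powerset.1 hT)
  rw [← union_sdiff_cancel_left (hdisj hT₁), ← union_sdiff_cancel_left (hdisj hT₂)]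
  exact congrArg (· \ S) h

theorem notMem_union_of_subset_freeNbrs {v : V} {S T : Finset V}
    (hSv : Disjoint S (insert v (G.neighborFinset v))) (hT : T ⊆ G.freeNbrs v S) :
    v ∉ S ∪ T := by
  rw [mem_union, not_or]
  exact ⟨disjoint_right.1 hSv (mem_insert_self _ _),
    fun hv => notMem_freeNbrs_self v S (hT hv)⟩

theorem insert_notMem_image_union {v : V} {S : Finset V}
    (hSv : Disjoint S (insert v (G.neighborFinset v))) :
    insert v S ∉ (G.freeNbrs v S).powerset.image (S ∪ ·) := by
  simp only [mem_image, mem_powerset, not_exists, not_and]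
  intro T hT h
  exact notMem_union_of_subset_freeNbrs hSv hT (h ▸ mem_insert_self v S)

theorem card_extensions {v : V} {S : Finset V}
    (hSv : Disjoint S (insert v (G.neighborFinset v))) :
    #(G.extensions v S) = 2 ^ #(G.freeNbrs v S) + 1 := by
  rw [extensions, card_insert_of_notMem (insert_notMem_image_union hSv),
    card_image_of_injOn (injOn_union_powerset_freeNbrs hSv), card_powerset]

theorem nbhdWeight_insert {Δ : ℕ} {v : V} {S : Finset V}
    (hSv : Disjoint S (insert v (G.neighborFinset v))) :
    G.nbhdWeight Δ v (insert v S) = Δ := by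
  have : insert v S ∩ G.neighborFinset v = ∅ := by
    rw [insert_inter_of_notMem (by simp),
      disjoint_iff_inter_eq_empty.1 (hSv.mono_right (subset_insert _ _))]
  simp [nbhdWeight, this]

theorem nbhdWeight_union {Δ : ℕ} {v : V} {S T : Finset V}
    (hSv : Disjoint S (insert v (G.neighborFinset v))) (hT : T ⊆ G.freeNbrs v S) :
    G.nbhdWeight Δ v (S ∪ T) = #T := by
  have : (S ∪ T) ∩ G.neighborFinset v = T := by
    rw [union_inter_distrib_right,
      disjoint_iff_inter_eq_empty.1 (hSv.mono_right (subset_insert _ _)), empty_union,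
      inter_eq_left.2 (hT.trans (filter_subset _ _))]
  simp [nbhdWeight, notMem_union_of_subset_freeNbrs hSv hT, this]

theorem sum_nbhdWeight_extensions (Δ : ℕ) {v : V} {S : Finset V}
    (hSv : Disjoint S (insert v (G.neighborFinset v))) :
    ∑ s ∈ G.extensions v S, G.nbhdWeight Δ v s = Δ + ∑ T ∈ (G.freeNbrs v S).powerset, #T := by
  rw [extensions, sum_insert (insert_notMem_image_union hSv),
    sum_image (injOn_union_powerset_freeNbrs hSv), nbhdWeight_insert hSv]
  exact congrArg (Δ + ·) (sum_congr rfl fun T hT => nbhdWeight_union hSv (mem_powerset.1 hT))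

theorem mem_extensions_sdiff {s : Finset V} (hs : G.IsIndepSet s) (v : V) :
    s ∈ G.extensions v (s \ insert v (G.neighborFinset v)) := by
  rw [extensions, mem_insert, mem_image]
  by_cases hv : v ∈ s
  · left
    have hN : ∀ u ∈ s, u ∉ G.neighborFinset v := fun u hu hvu =>
      hs hv hu (G.ne_of_adj ((G.mem_neighborFinset v u).1 hvu)) ((G.mem_neighborFinset v u).1 hvu)
    ext u
    by_cases huv : u = v
    · simp [huv, hv]
    · simp only [mem_insert, mem_sdiff, huv, false_or]
      exact ⟨fun hu => ⟨hu, hN u hu⟩, And.left⟩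
  · right
    refine ⟨s ∩ G.neighborFinset v, mem_powerset.2 fun u hu => ?_, ?_⟩
    · rw [mem_inter] at hu
      refine mem_filter.2 ⟨hu.2, fun w hw huw => hs hu.1 (mem_sdiff.1 hw).1 (G.ne_of_adj huw) huw⟩
    · rw [← inter_insert_of_notMem hv, sdiff_union_inter]

theorem isIndepSet_of_mem_extensions (htri : G.CliqueFree 3) {v : V} {S s : Finset V}
    (hS : G.IsIndepSet S) (hSv : Disjoint S (insert v (G.neighborFinset v)))
    (hs : s ∈ G.extensions v S) : G.IsIndepSet s := by
  have hSN : ∀ w ∈ S, ¬ G.Adj v w := fun w hw hvw =>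
    Finset.disjoint_left.1 hSv hw (mem_insert_of_mem ((G.mem_neighborFinset v w).2 hvw))
  rw [extensions, mem_insert, mem_image] at hs
  rcases hs with rfl | ⟨T, hT, rfl⟩
  · rw [coe_insert, SimpleGraph.IsIndepSet, Set.pairwise_insert]
    exact ⟨hS, fun w hw _ => ⟨hSN w hw, fun hwv => hSN w hw hwv.symm⟩⟩
  · have hTN : (T : Set V) ⊆ G.neighborSet v := fun u hu =>
      (G.mem_neighborFinset v u).1 (mem_filter.1 (mem_powerset.1 hT hu)).1
    have hTS : ∀ u ∈ T, ∀ w ∈ S, ¬ G.Adj u w := fun u hu =>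
      (mem_filter.1 (mem_powerset.1 hT hu)).2
    rw [coe_union, SimpleGraph.IsIndepSet, Set.pairwise_union]
    refine ⟨hS, (G.isIndepSet_neighborSet_of_triangleFree htri v).mono hTN, ?_⟩
    exact fun w hw u hu _ => ⟨fun hwu => hTS u hu w hw hwu.symm, hTS u hu w hw⟩

theorem sdiff_eq_of_mem_extensions {v : V} {S s : Finset V}
    (hSv : Disjoint S (insert v (G.neighborFinset v))) (hs : s ∈ G.extensions v S) :
    s \ insert v (G.neighborFinset v) = S := by
  rw [extensions, mem_insert, mem_image] at hs
  rcases hs with rfl | ⟨T, hT, rfl⟩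
  · rw [insert_sdiff_of_mem _ (mem_insert_self _ _), sdiff_eq_self_of_disjoint hSv]
  · have hTN : T ⊆ insert v (G.neighborFinset v) :=
      (mem_powerset.1 hT).trans ((filter_subset _ _).trans (subset_insert _ _))
    rw [union_sdiff_distrib, sdiff_eq_self_of_disjoint hSv, sdiff_eq_empty_iff_subset.2 hTN,
      union_empty]

theorem filter_sdiff_eq_extensions (htri : G.CliqueFree 3) {v : V} {S : Finset V}
    (hS : G.IsIndepSet S) (hSv : Disjoint S (insert v (G.neighborFinset v))) :
    {s ∈ G.indepSets | s \ insert v (G.neighborFinset v) = S} = G.extensions v S := by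
  ext s
  rw [mem_filter, mem_indepSets]
  constructor
  · rintro ⟨hs, rfl⟩
    exact mem_extensions_sdiff hs v
  · intro hs
    exact ⟨isIndepSet_of_mem_extensions htri hS hSv hs, sdiff_eq_of_mem_extensions hSv hs⟩

theorem logb_mul_card_indepSets_le (htri : G.CliqueFree 3) {Δ : ℕ} (hΔ : 0 < Δ) (v : V) :
    Real.logb 2 Δ * #G.indepSets ≤ 2 * ∑ s ∈ G.indepSets, (G.nbhdWeight Δ v s : ℝ) := by
  have hmaps : ∀ s ∈ G.indepSets,
      s \ insert v (G.neighborFinset v) ∈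
        {S ∈ G.indepSets | Disjoint S (insert v (G.neighborFinset v))} := fun s hs =>
    mem_filter.2 ⟨mem_indepSets.2 ((mem_indepSets.1 hs).mono (coe_subset.2 sdiff_subset)),
      sdiff_disjoint⟩
  rw [← sum_fiberwise_of_maps_to hmaps, card_eq_sum_card_fiberwise hmaps]
  push_cast
  rw [mul_sum, mul_sum]
  refine sum_le_sum fun S hS => ?_
  obtain ⟨hSI, hSv⟩ := mem_filter.1 hS
  rw [filter_sdiff_eq_extensions htri (mem_indepSets.1 hSI) hSv, card_extensions hSv,
    ← Nat.cast_sum, sum_nbhdWeight_extensions Δ hSv]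
  have hlog := Real.logb_two_mul_two_pow_add_one_le (Nat.cast_pos.2 hΔ : (0 : ℝ) < Δ)
    #(G.freeNbrs v S)
  have hpow : (2 : ℝ) * ∑ T ∈ (G.freeNbrs v S).powerset, (#T : ℝ) =
      #(G.freeNbrs v S) * 2 ^ #(G.freeNbrs v S) := by
    exact_mod_cast two_mul_sum_card_powerset (G.freeNbrs v S)
  push_cast
  linarith

theorem sum_nbhdWeight_le {Δ : ℕ} (hdeg : ∀ v, G.degree v ≤ Δ) (s : Finset V) :
    ∑ v, G.nbhdWeight Δ v s ≤ 2 * Δ * #s := by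
  have hself : ∑ v, (if v ∈ s then Δ else 0) = Δ * #s := by
    rw [sum_ite_mem, univ_inter, sum_const, smul_eq_mul, mul_comm]
  have hnbr : ∑ v, #(s ∩ G.neighborFinset v) = ∑ w ∈ s, G.degree w := by
    simp only [← filter_mem_eq_inter, card_filter, mem_neighborFinset]
    rw [sum_comm]
    refine sum_congr rfl fun w _ => ?_
    rw [← card_neighborFinset_eq_degree, neighborFinset_eq_filter, card_filter]
    simp only [G.adj_comm]
  calc ∑ v, G.nbhdWeight Δ v s = Δ * #s + ∑ w ∈ s, G.degree w := by
        rw [← hself, ← hnbr, ← sum_add_distrib]; rfl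
    _ ≤ Δ * #s + ∑ _w ∈ s, Δ := by gcongr with w; exact hdeg w
    _ = 2 * Δ * #s := by rw [sum_const, smul_eq_mul]; ring

theorem card_mul_logb_mul_card_indepSets_le (htri : G.CliqueFree 3) {Δ : ℕ} (hΔ : 0 < Δ)
    (hdeg : ∀ v, G.degree v ≤ Δ) :
    Fintype.card V * Real.logb 2 Δ * #G.indepSets ≤ 4 * Δ * ∑ s ∈ G.indepSets, (#s : ℝ) :=
  calc Fintype.card V * Real.logb 2 Δ * #G.indepSets
      = ∑ _v : V, Real.logb 2 Δ * #G.indepSets := by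
        rw [sum_const, card_univ, nsmul_eq_mul, mul_assoc]
    _ ≤ ∑ v : V, 2 * ∑ s ∈ G.indepSets, (G.nbhdWeight Δ v s : ℝ) :=
        sum_le_sum fun v _ => logb_mul_card_indepSets_le htri hΔ v
    _ = 2 * ∑ s ∈ G.indepSets, ((∑ v, G.nbhdWeight Δ v s : ℕ) : ℝ) := by
        rw [← mul_sum, sum_comm]; push_cast; rfl
    _ ≤ 2 * ∑ s ∈ G.indepSets, ((2 * Δ * #s : ℕ) : ℝ) := by
        gcongr with s; exact_mod_cast sum_nbhdWeight_le hdeg s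
    _ = 4 * Δ * ∑ s ∈ G.indepSets, (#s : ℝ) := by
        rw [mul_sum, mul_sum]; push_cast; ring_nf

theorem sum_card_indepSets_le : ∑ s ∈ G.indepSets, #s ≤ #G.indepSets * G.indepNum :=
  sum_le_card_nsmul _ _ _ fun _ hs => (mem_indepSets.1 hs).card_le_indepNum

theorem card_mul_logb_le_indepNum (htri : G.CliqueFree 3) {Δ : ℕ} (hΔ : 0 < Δ)
    (hdeg : ∀ v, G.degree v ≤ Δ) :
    Fintype.card V * Real.logb 2 Δ ≤ 4 * Δ * G.indepNum := by
  have hI : (0 : ℝ) < #G.indepSets := Nat.cast_pos.2 (card_pos.2 ⟨∅, by simp⟩)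
  refine le_of_mul_le_mul_right ?_ hI
  calc Fintype.card V * Real.logb 2 Δ * #G.indepSets
      ≤ 4 * Δ * ∑ s ∈ G.indepSets, (#s : ℝ) :=
        card_mul_logb_mul_card_indepSets_le htri hΔ hdeg
    _ ≤ 4 * Δ * (#G.indepSets * G.indepNum) := by
        gcongr; exact_mod_cast sum_card_indepSets_le
    _ = 4 * Δ * G.indepNum * #G.indepSets := by ring

end SimpleGraph

theorem statement4 {W : Type*} [Fintype W] (G : SimpleGraph W) (Δ : ℕ) (hΔ : 0 < Δ)
    (hdeg : ∀ v : W, (G.neighborSet v).ncard ≤ Δ)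
    (htri : G.CliqueFree 3) :
    (Fintype.card W : ℝ) / (8 * Δ) * Real.logb 2 Δ ≤ (indepNum G : ℝ) := by
  classical
  have hdeg' : ∀ v, G.degree v ≤ Δ := fun v => by
    rw [← G.card_neighborFinset_eq_degree, SimpleGraph.neighborFinset,
      ← Set.ncard_eq_toFinset_card']
    exact hdeg v
  have hΔR : (0 : ℝ) < Δ := Nat.cast_pos.2 hΔ
  have key := G.card_mul_logb_le_indepNum htri hΔ hdeg'
  rw [indepNum_eq_indepNum, div_mul_eq_mul_div, div_le_iff₀ (by positivity)]
  nlinarith [mul_nonneg hΔR.le (Nat.cast_nonneg (α := ℝ) G.indepNum)]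
end

section
/- Let n and d be positive integers with 2 ≤ d ≤ n and write d' = d−1. If v is a vertex of the Hamming sphere graph G_S of Hamming weight w (so 1 ≤ w ≤ d'), then the degree of v in G_S equals ∑_{i=1}^{d'} ∑_{j=⌈(w+i−d')/2⌉⁺}^{min{w,i}} C(w,j)·C(n−w,i−j) − 1. -/
open Finset

/-- `⌈(w+i-d')/2⌉⁺`: the smallest nonnegative integer `m` with `m ≥ (w+i-d')/2`. -/
def ceilPos (w i d' : ℕ) : ℕ := (((w : ℤ) + i - d' + 1) / 2).toNat

/-- The Gilbert graph: vertices are `𝔽₂ⁿ`, two distinct vertices adjacent iff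
their Hamming distance is at most `d - 1`. -/
def gilbertGraph (n d : ℕ) : SimpleGraph (Fin n → ZMod 2) where
  Adj u v := u ≠ v ∧ hammingDist u v ≤ d - 1
  symm := ⟨fun u v h => ⟨h.1.symm, by rw [hammingDist_comm]; exact h.2⟩⟩
  loopless := ⟨fun u h => h.1 rfl⟩

/-- The Hamming sphere graph: the subgraph of the Gilbert graph induced by the
neighborhood of the all-zero vector, i.e. the nonzero vectors of weight at most `d - 1`,
with two distinct vertices adjacent iff their Hamming distance is at most `d - 1`. -/
def sphereGraph (n d : ℕ) : SimpleGraph ((gilbertGraph n d).neighborSet 0) :=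
  (gilbertGraph n d).induce ((gilbertGraph n d).neighborSet 0)

/-!
Identify a binary word with its support. A neighbour of `v` in `G_S` is a word `x ∉ {0, v}`
with `wt x ≤ d'` and `d(x, v) ≤ d'`. If `x` has weight `i` and its support meets that of `v`
in `j` coordinates, then `d(x, v) = (i - j) + (w - j)`, which is at most `d'` exactly when
`j ≥ ⌈(w + i - d')/2⌉⁺`, and there are `C(w, j) · C(n - w, i - j)` such words. The double
sum therefore counts the common neighbours of `0` and `v` in the Gilbert graph together with
`v` itself.
-/

open scoped symmDiff

theorem card_filter_le_and_le_and_eq_sum {α : Type*} [Fintype α] (f : α → ℕ)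
    (p : α → Prop) [DecidablePred p] (a b : ℕ) :
    #{x | a ≤ f x ∧ f x ≤ b ∧ p x} = ∑ i ∈ Icc a b, #{x | f x = i ∧ p x} := by
  rw [card_eq_sum_card_fiberwise (f := f) (t := Icc a b)]
  · refine sum_congr rfl fun i hi => congrArg card ?_
    rw [filter_filter]
    refine filter_congr fun x _ => ?_
    constructor
    · rintro ⟨⟨-, -, hp⟩, rfl⟩
      exact ⟨rfl, hp⟩
    · rintro ⟨rfl, hp⟩
      exact ⟨⟨(mem_Icc.mp hi).1, (mem_Icc.mp hi).2, hp⟩, rfl⟩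
  · intro x hx
    simp only [coe_filter, mem_univ, true_and, Set.mem_ofPred_eq] at hx
    exact mem_Icc.mpr ⟨hx.1, hx.2.1⟩

section Counting

variable {α : Type*} [DecidableEq α]

theorem card_symmDiff_eq (S P : Finset α) :
    #(S ∆ P) = (#S - #(S ∩ P)) + (#P - #(S ∩ P)) := by
  rw [symmDiff_def, sup_eq_union, card_union_of_disjoint disjoint_sdiff_sdiff, card_sdiff,
    card_sdiff, inter_comm P S, inter_comm]

theorem card_symmDiff_le_iff (S P : Finset α) (d' : ℕ) :
    #(S ∆ P) ≤ d' ↔ ceilPos #P #S d' ≤ #(S ∩ P) := by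
  have hS := card_le_card (inter_subset_left : S ∩ P ⊆ S)
  have hP := card_le_card (inter_subset_right : S ∩ P ⊆ P)
  rw [card_symmDiff_eq, ceilPos]
  omega

variable [Fintype α]

theorem card_filter_card_eq_and_card_inter_eq (P : Finset α) {i j : ℕ} (hji : j ≤ i) :
    #{S : Finset α | #S = i ∧ #(S ∩ P) = j} = (#P).choose j * (#Pᶜ).choose (i - j) := by
  have hsplit {A B : Finset α} (hA : A ⊆ P) (hB : Disjoint B P) :
      (A ∪ B) ∩ P = A ∧ (A ∪ B) \ P = B := by
    rw [union_inter_distrib_right, inter_eq_left.mpr hA, disjoint_iff_inter_eq_empty.mp hB,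
      union_empty, union_sdiff_distrib, sdiff_eq_empty_iff_subset.mpr hA, hB.sdiff_eq_left,
      empty_union]
    exact ⟨rfl, rfl⟩
  rw [← card_powersetCard, ← card_powersetCard, ← card_product]
  refine card_bij' (fun S _ => (S ∩ P, S \ P)) (fun AB _ => AB.1 ∪ AB.2) ?_ ?_ ?_ ?_
  · intro S hS
    simp only [mem_filter, mem_univ, true_and] at hS
    simp only [mem_product, mem_powersetCard]
    refine ⟨⟨inter_subset_right, hS.2⟩, fun x hx => by simp_all, ?_⟩
    rw [card_sdiff, inter_comm, hS.1, hS.2]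
  · rintro ⟨A, B⟩ hAB
    simp only [mem_product, mem_powersetCard, subset_compl_iff_disjoint_right] at hAB
    obtain ⟨⟨hA, rfl⟩, hB, hBcard⟩ := hAB
    simp only [mem_filter, mem_univ, true_and, (hsplit hA hB).1, and_true]
    rw [card_union_of_disjoint (disjoint_of_subset_left hA hB.symm)]
    omega
  · intro S _
    rw [union_comm]
    exact sdiff_union_inter S P
  · rintro ⟨A, B⟩ hAB
    simp only [mem_product, mem_powersetCard, subset_compl_iff_disjoint_right] at hAB
    rw [(hsplit hAB.1.1 hAB.2.1).1, (hsplit hAB.1.1 hAB.2.1).2]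

theorem card_filter_card_eq_and_card_symmDiff_le (P : Finset α) (i d' : ℕ) :
    #{S : Finset α | #S = i ∧ #(S ∆ P) ≤ d'} =
      ∑ j ∈ Icc (ceilPos #P i d') (min #P i), (#P).choose j * (#Pᶜ).choose (i - j) := by
  rw [card_eq_sum_card_fiberwise (f := fun S => #(S ∩ P))
    (t := Icc (ceilPos #P i d') (min #P i))]
  · refine sum_congr rfl fun j hj => ?_
    have hj := mem_Icc.mp hj
    rw [← card_filter_card_eq_and_card_inter_eq P (hj.2.trans (min_le_right _ _)),
      filter_filter]
    refine congrArg card (filter_congr fun S _ => ?_)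
    rw [card_symmDiff_le_iff]
    constructor
    · rintro ⟨⟨rfl, -⟩, rfl⟩
      exact ⟨rfl, rfl⟩
    · rintro ⟨rfl, rfl⟩
      exact ⟨⟨rfl, hj.1⟩, rfl⟩
  · intro S hS
    simp only [coe_filter, mem_univ, true_and, Set.mem_ofPred_eq, card_symmDiff_le_iff] at hS
    obtain ⟨rfl, hS⟩ := hS
    simp only [coe_Icc, Set.mem_Icc, le_min_iff]
    exact ⟨hS, card_le_card inter_subset_right, card_le_card inter_subset_left⟩

end Counting

def supportEquiv (ι : Type*) [Fintype ι] [DecidableEq ι] : (ι → ZMod 2) ≃ Finset ι where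
  toFun x := {i | x i ≠ 0}
  invFun S i := if i ∈ S then 1 else 0
  left_inv x := by
    funext i
    have : x i = 0 ∨ x i = 1 := by generalize x i = z; revert z; decide
    rcases this with h | h <;> simp [h]
  right_inv S := by ext i; simp

section Hamming

variable {ι : Type*} [Fintype ι] [DecidableEq ι]

theorem hammingNorm_eq_card_supportEquiv (x : ι → ZMod 2) :
    hammingNorm x = #(supportEquiv ι x) := rfl

theorem hammingDist_eq_card_symmDiff (x y : ι → ZMod 2) :
    hammingDist x y = #(supportEquiv ι x ∆ supportEquiv ι y) := by
  refine congrArg card (ext fun i => ?_)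
  simp only [supportEquiv, Equiv.coe_fn_mk, mem_filter, mem_univ, true_and, mem_symmDiff]
  generalize x i = a; generalize y i = b
  revert a b; decide

theorem card_filter_hammingNorm_eq_and_hammingDist_le (v : ι → ZMod 2) (i d' : ℕ) :
    #{x : ι → ZMod 2 | hammingNorm x = i ∧ hammingDist x v ≤ d'} =
      ∑ j ∈ Icc (ceilPos (hammingNorm v) i d') (min (hammingNorm v) i),
        (hammingNorm v).choose j * (Fintype.card ι - hammingNorm v).choose (i - j) := by
  rw [hammingNorm_eq_card_supportEquiv v, ← card_compl,
    ← card_filter_card_eq_and_card_symmDiff_le]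
  refine card_equiv (supportEquiv ι) fun x => ?_
  simp only [mem_filter, mem_univ, true_and, hammingNorm_eq_card_supportEquiv,
    hammingDist_eq_card_symmDiff]

end Hamming

theorem SimpleGraph.ncard_neighborSet_induce_neighborSet {V : Type*} (G : SimpleGraph V)
    (a : V) (v : G.neighborSet a) :
    ((G.induce (G.neighborSet a)).neighborSet v).ncard = (G.commonNeighbors a v).ncard := by
  rw [← Set.ncard_image_of_injective _ Subtype.val_injective, neighborSet_induce,
    Set.image_preimage_eq_inter_range, Subtype.range_coe, Set.inter_comm, commonNeighbors]

theorem gilbertGraph_ncard_commonNeighbors_zero_add_one {n d : ℕ} {v : Fin n → ZMod 2}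
    (hv : (gilbertGraph n d).Adj 0 v) :
    ((gilbertGraph n d).commonNeighbors 0 v).ncard + 1 =
      #{x | 1 ≤ hammingNorm x ∧ hammingNorm x ≤ d - 1 ∧ hammingDist x v ≤ d - 1} := by
  set F : Finset (Fin n → ZMod 2) :=
    {x | 1 ≤ hammingNorm x ∧ hammingNorm x ≤ d - 1 ∧ hammingDist x v ≤ d - 1}
  have hcommon : (gilbertGraph n d).commonNeighbors 0 v = (F.erase v : Set _) := by
    ext x
    simp only [F, SimpleGraph.mem_commonNeighbors, gilbertGraph, coe_erase, coe_filter, mem_univ,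
      true_and, Set.mem_sdiff, Set.mem_ofPred_eq, Set.mem_singleton_iff, hammingDist_zero_left,
      Nat.one_le_iff_ne_zero, Ne, hammingNorm_eq_zero, hammingDist_comm v]
    tauto
  have hmem : v ∈ F := by
    simp only [gilbertGraph, hammingDist_zero_left] at hv
    simp only [F, mem_filter, mem_univ, true_and, hammingDist_self, zero_le, and_true,
      Nat.one_le_iff_ne_zero, Ne, hammingNorm_eq_zero]
    exact ⟨Ne.symm hv.1, hv.2⟩
  rw [hcommon, Set.ncard_coe_finset, card_erase_add_one hmem]

theorem statement7_general (n d : ℕ)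
    (w : ℕ)
    (v : (gilbertGraph n d).neighborSet 0)
    (hv : hammingNorm (v : Fin n → ZMod 2) = w) :
    (((sphereGraph n d).neighborSet v).ncard : ℤ) =
      (∑ i ∈ Finset.Icc 1 (d - 1), ∑ j ∈ Finset.Icc (ceilPos w i (d - 1)) (min w i),
        (w.choose j : ℤ) * ((n - w).choose (i - j))) - 1 := by
  have hfiber (i : ℕ) :
      #{x | hammingNorm x = i ∧ hammingDist x (v : Fin n → ZMod 2) ≤ d - 1} =
      ∑ j ∈ Icc (ceilPos w i (d - 1)) (min w i), w.choose j * (n - w).choose (i - j) := by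
    rw [card_filter_hammingNorm_eq_and_hammingDist_le, hv, Fintype.card_fin]
  have hcount : ((sphereGraph n d).neighborSet v).ncard + 1 =
      ∑ i ∈ Icc 1 (d - 1), ∑ j ∈ Icc (ceilPos w i (d - 1)) (min w i),
        w.choose j * (n - w).choose (i - j) := by
    rw [sphereGraph, SimpleGraph.ncard_neighborSet_induce_neighborSet,
      gilbertGraph_ncard_commonNeighbors_zero_add_one v.2, card_filter_le_and_le_and_eq_sum]
    exact sum_congr rfl fun i _ => hfiber i
  rw [eq_sub_iff_add_eq]
  exact_mod_cast hcount

theorem statement7 (n d : ℕ) (hd : 2 ≤ d) (hdn : d ≤ n)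
    (w : ℕ) (hw1 : 1 ≤ w) (hw2 : w ≤ d - 1)
    (v : (gilbertGraph n d).neighborSet 0)
    (hv : hammingNorm (v : Fin n → ZMod 2) = w) :
    (((sphereGraph n d).neighborSet v).ncard : ℤ) =
      (∑ i ∈ Finset.Icc 1 (d - 1), ∑ j ∈ Finset.Icc (ceilPos w i (d - 1)) (min w i),
        (w.choose j : ℤ) * ((n - w).choose (i - j))) - 1 :=
  statement7_general n d w v hv
end

section
/- Let n and d be positive integers with 2 ≤ d ≤ n and write d' = d−1. The number of edges of the Hamming sphere graph G_S equals e(G_S) = (1/2) · ∑_{w=1}^{d'} C(n,w) · ( ∑_{i=1}^{d'} ∑_{j=⌈(w+i−d')/2⌉⁺}^{min{w,i}} C(w,j)·C(n−w,i−j) − 1 ). -/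
open Finset

/-! Double counting: `2 e(G_S)` is the sum of the degrees. A vertex `v` of weight `w` has as
closed neighbourhood the vectors `u` with `1 ≤ |u| ≤ d'` and `d(u, v) ≤ d'`; writing `i = |u|` and
`j = |supp u ∩ supp v|` gives `d(u, v) = w + i - 2j`, so there are `C(w, j) C(n - w, i - j)` such
`u` for each admissible `(i, j)`, and `d(u, v) ≤ d'` is exactly `j ≥ ⌈(w + i - d')/2⌉⁺`. There are
`C(n, w)` vertices of weight `w`. -/

lemma ceilPos_le_iff {w i d' j : ℕ} : ceilPos w i d' ≤ j ↔ w + i ≤ d' + 2 * j := by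
  rw [ceilPos, Int.toNat_le]; omega

open scoped symmDiff

namespace Finset

variable {ι : Type*}

lemma card_filter_card_eq [Fintype ι] (k : ℕ) :
    #{s : Finset ι | #s = k} = (Fintype.card ι).choose k := by
  rw [← card_univ, ← card_powersetCard]
  congr 1
  ext s
  rw [mem_filter_univ, mem_powersetCard_univ]

variable [DecidableEq ι]

lemma card_symmDiff_add_two_mul_card_inter (s t : Finset ι) :
    #(s ∆ t) + 2 * #(s ∩ t) = #s + #t := by
  rw [symmDiff_def, sup_eq_union, card_union_of_disjoint disjoint_sdiff_sdiff]
  have := card_sdiff_add_card_inter s t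
  have := card_sdiff_add_card_inter t s
  rw [inter_comm t s] at this
  omega

lemma union_inter_sdiff_of_subset_of_disjoint {a b t : Finset ι} (hat : a ⊆ t)
    (hbt : Disjoint b t) : (a ∪ b) ∩ t = a ∧ (a ∪ b) \ t = b := by
  rw [union_inter_distrib_right, inter_eq_left.mpr hat, disjoint_iff_inter_eq_empty.mp hbt,
    union_empty, union_sdiff_distrib, sdiff_eq_empty_iff_subset.mpr hat,
    sdiff_eq_self_of_disjoint hbt, empty_union]
  exact ⟨rfl, rfl⟩

variable [Fintype ι]

lemma card_filter_card_eq_card_inter_eq (t : Finset ι) {i j : ℕ} (hji : j ≤ i) :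
    #{s : Finset ι | #s = i ∧ #(s ∩ t) = j} =
      (#t).choose j * (Fintype.card ι - #t).choose (i - j) := by
  rw [← card_compl, ← card_powersetCard j t, ← card_powersetCard (i - j) tᶜ, ← card_product]
  refine card_nbij' (fun s => (s ∩ t, s \ t)) (fun p => p.1 ∪ p.2) ?_ ?_ ?_ ?_
  · intro s hs
    simp only [mem_coe, mem_filter_univ, mem_product, mem_powersetCard] at hs ⊢
    have := card_sdiff_add_card_inter s t
    exact ⟨⟨inter_subset_right, hs.2⟩, fun x hx => mem_compl.mpr (mem_sdiff.mp hx).2, by omega⟩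
  · rintro ⟨a, b⟩ hp
    simp only [mem_coe, mem_filter_univ, mem_product, mem_powersetCard] at hp ⊢
    obtain ⟨⟨hat, rfl⟩, hbt, hb⟩ := hp
    have hbt' : Disjoint b t := subset_compl_iff_disjoint_right.mp hbt
    rw [card_union_of_disjoint (disjoint_of_subset_left hat hbt'.symm),
      (union_inter_sdiff_of_subset_of_disjoint hat hbt').1]
    omega
  · intro s _
    exact sup_inf_sdiff s t
  · rintro ⟨a, b⟩ hp
    simp only [mem_coe, mem_product, mem_powersetCard] at hp
    obtain ⟨hinter, hsdiff⟩ :=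
      union_inter_sdiff_of_subset_of_disjoint hp.1.1 (subset_compl_iff_disjoint_right.mp hp.2.1)
    simp only [hinter, hsdiff]

lemma card_filter_card_eq_card_symmDiff_le (t : Finset ι) (i r : ℕ) :
    #{s : Finset ι | #s = i ∧ #(s ∆ t) ≤ r} =
      ∑ j ∈ Icc (ceilPos #t i r) (min #t i),
        (#t).choose j * (Fintype.card ι - #t).choose (i - j) := by
  have hmaps : ∀ s ∈ ({s : Finset ι | #s = i ∧ #(s ∆ t) ≤ r} : Finset _),
      #(s ∩ t) ∈ Icc (ceilPos #t i r) (min #t i) := by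
    intro s hs
    rw [mem_filter_univ] at hs
    have := card_symmDiff_add_two_mul_card_inter s t
    have := card_le_card (inter_subset_left (s₁ := s) (s₂ := t))
    have := card_le_card (inter_subset_right (s₁ := s) (s₂ := t))
    rw [mem_Icc, ceilPos_le_iff]
    omega
  rw [card_eq_sum_card_fiberwise hmaps]
  refine sum_congr rfl fun j hj => ?_
  rw [mem_Icc, ceilPos_le_iff] at hj
  rw [filter_filter, ← card_filter_card_eq_card_inter_eq t (hj.2.trans (min_le_right _ _))]
  congr 1
  refine filter_congr fun s _ => ?_
  have := card_symmDiff_add_two_mul_card_inter s t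
  omega

end Finset

section Binary

variable {ι : Type*} [Fintype ι] [DecidableEq ι]

def binarySupportEquiv : (ι → ZMod 2) ≃ Finset ι where
  toFun u := {i | u i ≠ 0}
  invFun s i := if i ∈ s then 1 else 0
  left_inv u := by
    funext i
    have : u i = 0 ∨ u i = 1 := by generalize u i = a; decide +revert
    rcases this with h | h <;> simp [h]
  right_inv s := by ext i; by_cases h : i ∈ s <;> simp [h]

lemma hammingNorm_eq_card_binarySupportEquiv (u : ι → ZMod 2) :
    hammingNorm u = #(binarySupportEquiv u) := rfl

lemma hammingDist_eq_card_symmDiff_s8 (u v : ι → ZMod 2) :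
    hammingDist u v = #(binarySupportEquiv u ∆ binarySupportEquiv v) := by
  unfold hammingDist
  congr 1
  ext i
  simp only [mem_filter_univ, mem_symmDiff, binarySupportEquiv, Equiv.coe_fn_mk]
  generalize u i = a, v i = b
  revert a b
  decide

lemma card_hammingNorm_eq (k : ℕ) :
    #{u : ι → ZMod 2 | hammingNorm u = k} = (Fintype.card ι).choose k := by
  rw [← card_filter_card_eq]
  exact card_equiv binarySupportEquiv fun u => by
    rw [mem_filter_univ, mem_filter_univ]; rfl

lemma card_hammingNorm_eq_hammingDist_le (v : ι → ZMod 2) (i r : ℕ) :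
    #{u : ι → ZMod 2 | hammingNorm u = i ∧ hammingDist u v ≤ r} =
      ∑ j ∈ Icc (ceilPos (hammingNorm v) i r) (min (hammingNorm v) i),
        (hammingNorm v).choose j * (Fintype.card ι - hammingNorm v).choose (i - j) := by
  rw [hammingNorm_eq_card_binarySupportEquiv v, ← card_filter_card_eq_card_symmDiff_le]
  exact card_equiv binarySupportEquiv fun u => by
    simp [hammingNorm_eq_card_binarySupportEquiv, hammingDist_eq_card_symmDiff_s8]

lemma sum_filter_hammingNorm_mem {M : Type*} [AddCommMonoid M] (W : Finset ℕ) (f : ℕ → M) :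
    ∑ u : ι → ZMod 2 with hammingNorm u ∈ W, f (hammingNorm u) =
      ∑ w ∈ W, (Fintype.card ι).choose w • f w := by
  rw [← sum_fiberwise_of_maps_to' (g := hammingNorm) fun u hu => (mem_filter_univ u).1 hu]
  refine sum_congr rfl fun w hw => ?_
  rw [sum_const, filter_filter, ← card_hammingNorm_eq]
  congr 2
  exact filter_congr fun u _ => ⟨And.right, fun h => ⟨h ▸ hw, h⟩⟩

/-- The size of the closed neighbourhood of a weight-`w` vertex of the sphere graph (`r = d'`). -/
def closedNbhdCard (n r w : ℕ) : ℕ :=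
  ∑ i ∈ Icc 1 r, ∑ j ∈ Icc (ceilPos w i r) (min w i), w.choose j * (n - w).choose (i - j)

lemma card_hammingNorm_mem_Icc_hammingDist_le (v : ι → ZMod 2) (r : ℕ) :
    #{u : ι → ZMod 2 | hammingNorm u ∈ Icc 1 r ∧ hammingDist u v ≤ r} =
      closedNbhdCard (Fintype.card ι) r (hammingNorm v) := by
  rw [card_eq_sum_card_fiberwise fun u hu => ((mem_filter_univ u).1 hu).1, closedNbhdCard]
  refine sum_congr rfl fun i hi => ?_
  rw [← card_hammingNorm_eq_hammingDist_le, filter_filter]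
  congr 1
  refine filter_congr fun u _ => ?_
  constructor
  · rintro ⟨⟨_, hd⟩, rfl⟩; exact ⟨rfl, hd⟩
  · rintro ⟨rfl, hd⟩; exact ⟨⟨hi, hd⟩, rfl⟩

end Binary

instance (n d : ℕ) : DecidableRel (gilbertGraph n d).Adj :=
  fun u v => inferInstanceAs (Decidable (u ≠ v ∧ hammingDist u v ≤ d - 1))

instance (n d : ℕ) : DecidableRel (sphereGraph n d).Adj :=
  fun u v => inferInstanceAs (Decidable ((gilbertGraph n d).Adj u v))

lemma mem_neighborSet_zero_gilbertGraph {n d : ℕ} {v : Fin n → ZMod 2} :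
    v ∈ (gilbertGraph n d).neighborSet 0 ↔ hammingNorm v ∈ Icc 1 (d - 1) := by
  change 0 ≠ v ∧ hammingDist 0 v ≤ d - 1 ↔ _
  rw [hammingDist_zero_left, mem_Icc, Nat.one_le_iff_ne_zero, hammingNorm_ne_zero_iff, ne_comm]

lemma sphereGraph_adj {n d : ℕ} {x y : (gilbertGraph n d).neighborSet 0} :
    (sphereGraph n d).Adj x y ↔
      (x : Fin n → ZMod 2) ≠ y ∧ hammingDist (x : Fin n → ZMod 2) y ≤ d - 1 :=
  Iff.rfl

lemma sphereGraph_degree_add_one {n d : ℕ} (x : (gilbertGraph n d).neighborSet 0) :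
    (sphereGraph n d).degree x + 1 =
      #{u : Fin n → ZMod 2 | hammingNorm u ∈ Icc 1 (d - 1) ∧ hammingDist u x ≤ d - 1} := by
  have hx : (x : Fin n → ZMod 2) ∈
      ({u | hammingNorm u ∈ Icc 1 (d - 1) ∧ hammingDist u x ≤ d - 1} : Finset _) := by
    simpa using mem_neighborSet_zero_gilbertGraph.mp x.2
  rw [← card_erase_add_one hx, ← SimpleGraph.card_neighborFinset_eq_degree,
    ← card_map (Function.Embedding.subtype _)]
  congr 2
  ext u
  simp only [mem_map, mem_erase, mem_filter_univ, SimpleGraph.mem_neighborFinset,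
    Function.Embedding.coe_subtype, Subtype.exists, exists_and_right, exists_eq_right,
    sphereGraph_adj, mem_neighborSet_zero_gilbertGraph, exists_prop, hammingDist_comm _ u, ne_comm]
  tauto

lemma sum_neighborSet_zero_gilbertGraph {M : Type*} [AddCommMonoid M] (n d : ℕ) (f : ℕ → M) :
    ∑ x : (gilbertGraph n d).neighborSet 0, f (hammingNorm (x : Fin n → ZMod 2)) =
      ∑ w ∈ Icc 1 (d - 1), n.choose w • f w := by
  rw [← sum_subtype {v | hammingNorm v ∈ Icc 1 (d - 1)}
    (fun v => by rw [mem_filter_univ, mem_neighborSet_zero_gilbertGraph])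
    (fun v => f (hammingNorm v)), sum_filter_hammingNorm_mem, Fintype.card_fin]

lemma two_mul_card_edgeFinset_sphereGraph_add_sum_choose (n d : ℕ) :
    2 * #(sphereGraph n d).edgeFinset + ∑ w ∈ Icc 1 (d - 1), n.choose w =
      ∑ w ∈ Icc 1 (d - 1), n.choose w * closedNbhdCard n (d - 1) w := by
  have hdeg (x : (gilbertGraph n d).neighborSet 0) : (sphereGraph n d).degree x + 1 =
      closedNbhdCard n (d - 1) (hammingNorm (x : Fin n → ZMod 2)) := by
    rw [sphereGraph_degree_add_one, card_hammingNorm_mem_Icc_hammingDist_le, Fintype.card_fin]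
  have hvert := sum_neighborSet_zero_gilbertGraph n d fun _ => 1
  simp only [smul_eq_mul, mul_one] at hvert
  rw [← SimpleGraph.sum_degrees_eq_twice_card_edges, ← hvert, ← sum_add_distrib]
  simp only [hdeg, sum_neighborSet_zero_gilbertGraph, smul_eq_mul]

theorem statement8_general (n d : ℕ) :
    ((sphereGraph n d).edgeSet.ncard : ℝ) =
      (1 / 2) * ∑ w ∈ Finset.Icc 1 (d - 1), (n.choose w : ℝ) *
        ((∑ i ∈ Finset.Icc 1 (d - 1),
          ∑ j ∈ Finset.Icc (ceilPos w i (d - 1)) (min w i),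
            (w.choose j : ℝ) * ((n - w).choose (i - j))) - 1) := by
  have key := congrArg (Nat.cast : ℕ → ℝ) (two_mul_card_edgeFinset_sphereGraph_add_sum_choose n d)
  push_cast [closedNbhdCard] at key
  rw [← SimpleGraph.coe_edgeFinset, Set.ncard_coe_finset]
  simp only [mul_sub, mul_one, sum_sub_distrib]
  linarith

theorem statement8 (n d : ℕ) (hd : 2 ≤ d) (hdn : d ≤ n) :
    ((sphereGraph n d).edgeSet.ncard : ℝ) =
      (1 / 2) * ∑ w ∈ Finset.Icc 1 (d - 1), (n.choose w : ℝ) *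
        ((∑ i ∈ Finset.Icc 1 (d - 1),
          ∑ j ∈ Finset.Icc (ceilPos w i (d - 1)) (min w i),
            (w.choose j : ℝ) * ((n - w).choose (i - j))) - 1) :=
  statement8_general n d
end

section
/- Let n and d be integers with 2 ≤ d ≤ n, and set δ = (d−1)/n. Define f_GV(n,d) = 2ⁿ / V(n,d−1) and f_V(n,d) = 2^{n−1} / 2^{⌊log₂ V(n−1,d−2)⌋}. Then f_V(n,d) / f_GV(n,d) ≤ (δ + 1)/δ. -/
open Finset

/-- Volume of a Hamming ball of radius `d` in `𝔽₂ⁿ`. -/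
def V (n d : ℕ) : ℕ := ∑ i ∈ Finset.range (d + 1), n.choose i

/-- The Gilbert–Varshamov lower bound `f_GV(n,d) = 2ⁿ / V(n,d-1)`. -/
noncomputable def fGV (n d : ℕ) : ℝ := (2 : ℝ) ^ n / (V n (d - 1) : ℝ)

/-- The Varshamov lower bound `f_V(n,d) = 2^(n-1) / 2^⌊log₂ V(n-1,d-2)⌋`. -/
noncomputable def fV (n d : ℕ) : ℝ :=
  (2 : ℝ) ^ (n - 1) / (2 : ℝ) ^ (⌊Real.logb 2 (V (n - 1) (d - 2) : ℝ)⌋)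

/-!
Write `n = m + 1` and `d = k + 2`. Since `2^⌊log₂ x⌋ > x / 2`, the ratio `f_V / f_GV` is at most
`V(m+1, k+1) / V(m, k)`. By Pascal's rule `V(m+1, k+1) = V(m, k+1) + V(m, k)`, and the top term
`C(m, k+1) = C(m, k) (m-k)/(k+1)` of `V(m, k+1)` gives `(k+1) V(m, k+1) ≤ (m+1) V(m, k)`.
Hence the ratio is at most `1 + (m+1)/(k+1) = (n + d - 1)/(d - 1) = (δ + 1)/δ`.
-/

lemma V_succ_right (n k : ℕ) : V n (k + 1) = V n k + n.choose (k + 1) :=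
  sum_range_succ _ _

lemma choose_le_V (n k : ℕ) : n.choose k ≤ V n k :=
  single_le_sum (fun _ _ ↦ Nat.zero_le _) (self_mem_range_succ k)

lemma V_pos (n k : ℕ) : 0 < V n k :=
  (Nat.choose_zero_right n ▸ Nat.one_pos).trans_le
    (single_le_sum (fun _ _ ↦ Nat.zero_le _) (mem_range.mpr k.succ_pos))

lemma V_succ_succ (n k : ℕ) : V (n + 1) (k + 1) = V n (k + 1) + V n k := by
  induction k with
  | zero => simp [V, sum_range_succ]; omega
  | succ k ih =>
    rw [V_succ_right (n + 1), ih, Nat.choose_succ_succ, V_succ_right n (k + 1),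
      V_succ_right n k]
    ring

lemma succ_mul_V_succ_le (n k : ℕ) (hk : k ≤ n) :
    (k + 1) * V n (k + 1) ≤ (n + 1) * V n k := by
  calc (k + 1) * V n (k + 1) = (k + 1) * V n k + n.choose k * (n - k) := by
        rw [V_succ_right, ← Nat.choose_succ_right_eq]; ring
    _ ≤ (k + 1) * V n k + V n k * (n - k) := by gcongr; exact choose_le_V n k
    _ = (n + 1) * V n k := by rw [mul_comm (V n k), ← add_mul]; congr 1; omega

lemma V_succ_succ_div_V_le (n k : ℕ) (hk : k ≤ n) :
    (V (n + 1) (k + 1) : ℝ) / V n k ≤ (n + k + 2) / (k + 1) := by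
  have hV : ((k + 1) * V (n + 1) (k + 1) : ℕ) ≤ ((n + k + 2) * V n k : ℕ) := by
    rw [V_succ_succ]
    nlinarith [succ_mul_V_succ_le n k hk]
  rw [div_le_div_iff₀ (by exact_mod_cast V_pos n k) (by positivity)]
  exact_mod_cast (by linarith [hV] : V (n + 1) (k + 1) * (k + 1) ≤ (n + k + 2) * V n k)

lemma lt_two_zpow_floor_logb_succ {x : ℝ} (hx : 0 ≤ x) :
    x < (2 : ℝ) ^ (⌊Real.logb 2 x⌋ + 1) := by
  have := Int.lt_zpow_succ_log_self (b := 2) one_lt_two x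
  rwa [← Real.floor_logb_natCast hx, Nat.cast_ofNat] at this

lemma fV_div_fGV (m k : ℕ) :
    fV (m + 1) (k + 2) / fGV (m + 1) (k + 2) =
      V (m + 1) (k + 1) / (2 : ℝ) ^ (⌊Real.logb 2 (V m k : ℝ)⌋ + 1) := by
  have hA : (V (m + 1) (k + 1) : ℝ) ≠ 0 := by exact_mod_cast (V_pos _ _).ne'
  simp only [fV, fGV, Nat.add_sub_cancel, show k + 2 - 1 = k + 1 from rfl, pow_succ,
    zpow_add_one₀ (two_ne_zero' ℝ)]
  field_simp

theorem statement14 (n d : ℕ) (hd : 2 ≤ d) (hdn : d ≤ n) :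
    fV n d / fGV n d ≤ (((d : ℝ) - 1) / n + 1) / (((d : ℝ) - 1) / n) := by
  obtain ⟨m, rfl⟩ : ∃ m, n = m + 1 := ⟨n - 1, by omega⟩
  obtain ⟨k, rfl⟩ : ∃ k, d = k + 2 := ⟨d - 2, by omega⟩
  have hV : (0 : ℝ) < V m k := by exact_mod_cast V_pos m k
  calc fV (m + 1) (k + 2) / fGV (m + 1) (k + 2)
      = V (m + 1) (k + 1) / (2 : ℝ) ^ (⌊Real.logb 2 (V m k : ℝ)⌋ + 1) := fV_div_fGV m k
    _ ≤ V (m + 1) (k + 1) / V m k :=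
        div_le_div_of_nonneg_left (Nat.cast_nonneg _) hV (lt_two_zpow_floor_logb_succ hV.le).le
    _ ≤ (m + k + 2) / (k + 1) := V_succ_succ_div_V_le m k (by omega)
    _ = _ := by push_cast; rw [add_sub_assoc, show (2 : ℝ) - 1 = 1 by norm_num]; field_simp; ring
end
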